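/- Let σ > 1, z₀ > 1 and w₀ < 1 − z₀ (so in particular w₀ < 0), and set T := log(|w₀| / (|w₀| + 1 − z₀)). Then T > 0, and any solution z of the damped oscillator ODE with data (z₀, w₀) satisfies z(t) = z₀ + w₀(1 − e^{−t}) for all t ∈ [0, T]; moreover z(t) > 1 for t ∈ [0, T), z(T) = 1, and z'(T) = w₀ e^{−T} < 0. -/

import Mathlib

/-!
While `z ≥ 1` the force `Φ_σ'` vanishes, so the equation reduces to the free motion `z'' + z' = 0`,
whose solution with the given data is `z₀ + w₀ (1 - e^{-t})`; it decreases strictly and reaches `1`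
exactly at `T`. A continuous induction on `[0, T]` shows that `z` agrees with the free motion there:
wherever `z` and its velocity agree with the free motion before `T`, `z > 1` on a right
neighbourhood, so both are solutions of `z'' + z' = 0` on it with the same data at its left end.
-/

/-- The force `Φ_σ'` (derivative of the normalized adhesion potential with `u_* = 1`). -/
noncomputable def PhiD (σ u : ℝ) : ℝ :=
  if |u| ≤ 1 - 1/σ then 2*u
  else if 1 - 1/σ ≤ u ∧ u ≤ 1 then 2*(σ - 1)*(1 - u)
  else if -1 ≤ u ∧ u ≤ -1 + 1/σ then -(2*(σ - 1)*(1 + u))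
  else 0

open Set Filter Real

lemma PhiD_eq_zero_of_one_le {σ : ℝ} (hσ : 1 < σ) {u : ℝ} (hu : 1 ≤ u) : PhiD σ u = 0 := by
  have hinv_pos : 0 < 1 / σ := by positivity
  have hinv_lt : 1 / σ < 1 := (div_lt_one (by linarith)).mpr hσ
  rw [PhiD, abs_of_nonneg (by linarith)]
  split_ifs with h₁ h₂ h₃
  · linarith
  · rw [le_antisymm h₂.2 hu]; ring
  · linarith [h₃.2]
  · rfl

lemma eq_of_hasDerivAt_zero_of_mem_Icc {f : ℝ → ℝ} {a b : ℝ} (hf : ContinuousOn f (Icc a b))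
    (hf' : ∀ x ∈ Ioo a b, HasDerivAt f 0 x) : ∀ x ∈ Icc a b, f x = f a := by
  intro x hx
  rcases hx.1.eq_or_lt with rfl | hax
  · rfl
  obtain ⟨c, -, hc⟩ := exists_hasDerivAt_eq_slope f (fun _ ↦ 0) hax
    (hf.mono (Icc_subset_Icc_right hx.2)) fun y hy ↦ hf' y ⟨hy.1, hy.2.trans_le hx.2⟩
  have := (div_eq_zero_iff.mp hc.symm).resolve_right (sub_ne_zero.mpr hax.ne')
  linarith

lemma eq_zero_of_deriv_add_deriv_eq_zero {h h' h'' : ℝ → ℝ} {a b : ℝ}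
    (hh : ∀ t ∈ Icc a b, HasDerivAt h (h' t) t) (hh' : ∀ t ∈ Icc a b, HasDerivAt h' (h'' t) t)
    (hfree : ∀ t ∈ Ioo a b, h'' t + h' t = 0) (ha : h a = 0) (ha' : h' a = 0) :
    ∀ t ∈ Icc a b, h t = 0 ∧ h' t = 0 := by
  have hexp : ∀ t ∈ Icc a b, exp t * h' t = exp a * h' a := by
    refine eq_of_hasDerivAt_zero_of_mem_Icc
      (fun t ht ↦ ((hasDerivAt_exp t).mul (hh' t ht)).continuousAt.continuousWithinAt)
      fun t ht ↦ ?_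
    refine ((hasDerivAt_exp t).mul (hh' t (Ioo_subset_Icc_self ht))).congr_deriv ?_
    rw [← mul_add, add_comm, hfree t ht, mul_zero]
  have hvel : ∀ t ∈ Icc a b, h' t = 0 := fun t ht ↦ by
    simpa [ha', (exp_pos t).ne'] using hexp t ht
  have hpos : ∀ t ∈ Icc a b, h t = h a := eq_of_hasDerivAt_zero_of_mem_Icc
    (fun t ht ↦ (hh t ht).continuousAt.continuousWithinAt)
    fun t ht ↦ hvel t (Ioo_subset_Icc_self ht) ▸ hh t (Ioo_subset_Icc_self ht)
  exact fun t ht ↦ ⟨(hpos t ht).trans ha, hvel t ht⟩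

noncomputable def freeMotion (z₀ w₀ t : ℝ) : ℝ := z₀ + w₀ * (1 - exp (-t))

section freeMotion

variable (z₀ : ℝ) {w₀ : ℝ}

lemma freeMotion_zero : freeMotion z₀ w₀ 0 = z₀ := by simp [freeMotion]

lemma hasDerivAt_freeMotion (t : ℝ) : HasDerivAt (freeMotion z₀ w₀) (w₀ * exp (-t)) t :=
  ((((hasDerivAt_neg t).exp.const_sub 1).const_mul w₀).const_add z₀).congr_deriv (by ring)

lemma hasDerivAt_freeMotion_velocity (t : ℝ) :
    HasDerivAt (fun s ↦ w₀ * exp (-s)) (-(w₀ * exp (-t))) t := by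
  simpa using ((hasDerivAt_neg t).exp).const_mul w₀

lemma freeMotion_strictAnti (hw₀ : w₀ < 0) : StrictAnti (freeMotion z₀ w₀) := fun s t hst ↦ by
  have : exp (-t) < exp (-s) := exp_lt_exp.mpr (neg_lt_neg hst)
  simp only [freeMotion]
  nlinarith

lemma freeMotion_log_eq_one (hw₀ : w₀ < 0) (hz₀w₀ : w₀ < 1 - z₀) :
    freeMotion z₀ w₀ (log (|w₀| / (|w₀| + 1 - z₀))) = 1 := by
  rw [abs_of_neg hw₀]
  have hw₀_ne : w₀ ≠ 0 := hw₀.ne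
  have hden : 0 < -w₀ + 1 - z₀ := by linarith
  rw [freeMotion, exp_neg, exp_log (div_pos (by linarith) hden), inv_div]
  field_simp
  ring

end freeMotion

section exitTime

variable {F : ℝ → ℝ} {c b z₀ w₀ : ℝ} {z z' z'' : ℝ → ℝ}

theorem eq_freeMotion_of_lt_freeMotion (hF : ∀ u ≥ c, F u = 0)
    (hz : ∀ t ≥ (0:ℝ), HasDerivAt z (z' t) t) (hz' : ∀ t ≥ (0:ℝ), HasDerivAt z' (z'' t) t)
    (hode : ∀ t > (0:ℝ), z'' t + z' t + F (z t) = 0) (h0 : z 0 = z₀) (h0' : z' 0 = w₀)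
    (hc : ∀ t ∈ Ico 0 b, c < freeMotion z₀ w₀ t) :
    ∀ t ∈ Icc 0 b, z t = freeMotion z₀ w₀ t ∧ z' t = w₀ * exp (-t) := by
  set S := {t | z t = freeMotion z₀ w₀ t ∧ z' t = w₀ * exp (-t)}
  have hclosed : IsClosed (S ∩ Icc 0 b) := by
    have hcont : ContinuousOn (fun t ↦ ((z t, z' t), (freeMotion z₀ w₀ t, w₀ * exp (-t))))
        (Icc 0 b) := fun t ht ↦
      (((hz t ht.1).continuousAt.prodMk (hz' t ht.1).continuousAt).prodMk
        ((hasDerivAt_freeMotion z₀ t).continuousAt.prodMk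
          (hasDerivAt_freeMotion_velocity t).continuousAt)).continuousWithinAt
    convert hcont.preimage_isClosed_of_isClosed isClosed_Icc isClosed_diagonal using 1
    ext t
    simp [S, and_comm]
  refine fun t ht ↦ hclosed.Icc_subset_of_forall_mem_nhdsWithin (by simp [S, h0, h0', freeMotion])
    (fun x ⟨hxS, hx⟩ ↦ ?_) ht
  have hzx : c < z x := hxS.1 ▸ hc x hx
  obtain ⟨u, hxu, hzu⟩ := mem_nhdsGE_iff_exists_Icc_subset.mp
    (nhdsWithin_le_nhds ((hz x hx.1).continuousAt.eventually_const_lt hzx))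
  have hsub : Icc x u ⊆ Ici 0 := fun t ht ↦ hx.1.trans ht.1
  have hagree := eq_zero_of_deriv_add_deriv_eq_zero (h'' := fun t ↦ z'' t + w₀ * exp (-t))
    (fun t ht ↦ (hz t (hsub ht)).fun_sub (hasDerivAt_freeMotion z₀ t))
    (fun t ht ↦ ((hz' t (hsub ht)).fun_sub (hasDerivAt_freeMotion_velocity t)).congr_deriv
      (sub_neg_eq_add _ _))
    (fun t ht ↦ by
      have hzt : c ≤ z t := (hzu (Ioo_subset_Icc_self ht)).le
      have := hode t (hx.1.trans_lt ht.1)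
      rw [hF _ hzt] at this
      linarith)
    (sub_eq_zero.mpr hxS.1) (sub_eq_zero.mpr hxS.2)
  exact mem_of_superset (Icc_mem_nhdsGT hxu) fun t ht ↦
    ⟨sub_eq_zero.mp (hagree t ht).1, sub_eq_zero.mp (hagree t ht).2⟩

end exitTime

theorem case_IV (σ z₀ w₀ : ℝ) (hσ : 1 < σ) (hz₀ : 1 < z₀) (hw₀ : w₀ < 1 - z₀)
    (z z' z'' : ℝ → ℝ)
    (hz : ∀ t ≥ (0:ℝ), HasDerivAt z (z' t) t)
    (hz' : ∀ t ≥ (0:ℝ), HasDerivAt z' (z'' t) t)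
    (hode : ∀ t > (0:ℝ), z'' t + z' t + PhiD σ (z t) = 0)
    (h0 : z 0 = z₀) (h0' : z' 0 = w₀) :
    0 < Real.log (|w₀| / (|w₀| + 1 - z₀)) ∧
    (∀ t ∈ Set.Icc (0:ℝ) (Real.log (|w₀| / (|w₀| + 1 - z₀))),
        z t = z₀ + w₀ * (1 - Real.exp (-t))) ∧
    (∀ t ∈ Set.Ico (0:ℝ) (Real.log (|w₀| / (|w₀| + 1 - z₀))), 1 < z t) ∧
    z (Real.log (|w₀| / (|w₀| + 1 - z₀))) = 1 ∧
    z' (Real.log (|w₀| / (|w₀| + 1 - z₀)))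
      = w₀ * Real.exp (-(Real.log (|w₀| / (|w₀| + 1 - z₀)))) ∧
    w₀ * Real.exp (-(Real.log (|w₀| / (|w₀| + 1 - z₀)))) < 0 := by
  set T := Real.log (|w₀| / (|w₀| + 1 - z₀))
  have hw : w₀ < 0 := by linarith
  have hanti := freeMotion_strictAnti z₀ hw
  have hexit : freeMotion z₀ w₀ T = 1 := freeMotion_log_eq_one z₀ hw hw₀
  have hT : 0 < T := hanti.lt_iff_gt.mp (by rwa [hexit, freeMotion_zero])
  have hagree := eq_freeMotion_of_lt_freeMotion (fun _ ↦ PhiD_eq_zero_of_one_le hσ) hz hz' hode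
    h0 h0' fun t ht ↦ hexit ▸ hanti ht.2
  have hT_mem : T ∈ Icc 0 T := ⟨hT.le, le_rfl⟩
  refine ⟨hT, fun t ht ↦ (hagree t ht).1, fun t ht ↦ ?_, (hagree T hT_mem).1.trans hexit,
    (hagree T hT_mem).2, mul_neg_of_neg_of_pos hw (exp_pos _)⟩
  rw [(hagree t (Ico_subset_Icc_self ht)).1, ← hexit]
  exact hanti ht.2
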